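/- For the standard n-simplex Tₙ with vertices P₀ = 0 and P₁,…,Pₙ the standard basis vectors, and Pₙ₊₁ = (1/(n+1),…,1/(n+1)) its center of mass, the rule L(f) = ((n+1)/((n+2)·n!))·f(Pₙ₊₁) + (1/(n+2)!)·Σⱼ₌₀ⁿ f(Pⱼ) satisfies L(f) = ∫_{Tₙ} f dV for every polynomial f of total degree ≤ 2. -/

import Mathlib

/-!
Dirichlet's formula `∫_{Tₙ} ∏ xᵢ ^ dᵢ = ∏ dᵢ! / (n + ∑ dᵢ)!` is proved by induction on `n`: the
slice of `Tₙ₊₁` at first coordinate `t ∈ (0, 1)` is `(1 - t) • Tₙ`, so homogeneity of the integrand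
reduces the step to the Beta integral `∫₀¹ t ^ k (1 - t) ^ b = k! b! / (k + b + 1)!`.
The quadrature rule is linear, and a monomial of degree at most two is `1`, `x_a` or `x_a x_b`;
on these the rule and the integral both give `1 / n!`, `1 / (n + 1)!` and
`(1 + [a = b]) / (n + 2)!`.
-/

open MeasureTheory MvPolynomial

/-- The standard n-simplex in ℝⁿ. -/
def Simplex (n : ℕ) : Set (Fin n → ℝ) := {v | (∀ i, 0 ≤ v i) ∧ ∑ i, v i ≤ 1}

/-- The vertices of the standard n-simplex: `P 0 = 0` and `P (k+1)` is the k-th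
standard basis vector. -/
def simplexVertex (n : ℕ) (j : Fin (n + 1)) : Fin n → ℝ :=
  fun i => if (j : ℕ) = (i : ℕ) + 1 then 1 else 0

open Set
open scoped Nat Pointwise

theorem integral_pow_mul_one_sub_pow (k b : ℕ) :
    ∫ t in (0 : ℝ)..1, t ^ k * (1 - t) ^ b = (k ! * b ! : ℝ) / (k + b + 1)! := by
  induction b generalizing k with
  | zero => simp [integral_pow, Nat.factorial_succ, field]
  | succ b ih =>
    have hsplit (t : ℝ) :
        t ^ k * (1 - t) ^ (b + 1) = t ^ k * (1 - t) ^ b - t ^ (k + 1) * (1 - t) ^ b := by ring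
    simp_rw [hsplit]
    rw [intervalIntegral.integral_sub ((by fun_prop : Continuous _).intervalIntegrable _ _)
      ((by fun_prop : Continuous _).intervalIntegrable _ _), ih, ih,
      show k + 1 + b + 1 = k + (b + 1) + 1 by ring]
    simp only [Nat.factorial_succ, Nat.add_succ]
    push_cast
    field_simp
    ring

theorem setIntegral_smul_set_of_homogeneous {E : Type*} [NormedAddCommGroup E]
    [NormedSpace ℝ E] [MeasurableSpace E] [BorelSpace E] [FiniteDimensional ℝ E]
    (μ : Measure E) [μ.IsAddHaarMeasure] {f : E → ℝ} {c : ℝ} {m : ℕ} (hc : 0 < c)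
    (hf : ∀ x, f (c • x) = c ^ m * f x) (s : Set E) :
    ∫ x in c • s, f x ∂μ = c ^ (Module.finrank ℝ E + m) * ∫ x in s, f x ∂μ := by
  have h := Measure.setIntegral_comp_smul_of_pos μ f s hc
  simp only [hf, integral_const_mul, smul_eq_mul] at h
  rw [pow_add, mul_assoc, h, mul_inv_cancel_left₀ (by positivity)]

theorem isClosed_simplex (n : ℕ) : IsClosed (Simplex n) := by
  simp only [Simplex, ofPred_and, ofPred_forall]
  exact (isClosed_iInter fun i => isClosed_le continuous_const (continuous_apply i)).inter
    (isClosed_le (by fun_prop) continuous_const)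

theorem simplex_subset_Icc (n : ℕ) : Simplex n ⊆ Icc 0 1 := fun _ ⟨h0, h1⟩ =>
  ⟨h0, fun i => (Finset.single_le_sum (fun j _ => h0 j) (Finset.mem_univ i)).trans h1⟩

theorem isCompact_simplex (n : ℕ) : IsCompact (Simplex n) :=
  isCompact_Icc.of_isClosed_subset (isClosed_simplex n) (simplex_subset_Icc n)

theorem cons_mem_simplex_iff {n : ℕ} {t : ℝ} (ht : t < 1) (y : Fin n → ℝ) :
    Fin.cons t y ∈ Simplex (n + 1) ↔ 0 ≤ t ∧ y ∈ (1 - t) • Simplex n := by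
  have hc : 0 < 1 - t := by linarith
  rw [mem_smul_set_iff_inv_smul_mem₀ hc.ne']
  simp only [Simplex, mem_ofPred_eq, Fin.forall_fin_succ, Fin.sum_univ_succ, Fin.cons_zero,
    Fin.cons_succ, Pi.smul_apply, smul_eq_mul, ← Finset.mul_sum, inv_mul_le_iff₀ hc,
    mul_nonneg_iff_of_pos_left (inv_pos.2 hc)]
  constructor
  · rintro ⟨⟨ht0, hy⟩, hs⟩
    exact ⟨ht0, hy, by linarith⟩
  · rintro ⟨ht0, hy, hs⟩
    exact ⟨⟨ht0, hy⟩, by linarith⟩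

theorem setIntegral_simplex_succ {n : ℕ} {g : (Fin (n + 1) → ℝ) → ℝ}
    (hg : IntegrableOn g (Simplex (n + 1))) :
    ∫ v in Simplex (n + 1), g v =
      ∫ t in Ioo 0 1, ∫ y in (1 - t) • Simplex n, g (Fin.cons t y) := by
  set F := (Simplex (n + 1)).indicator g
  have hmeas := (isClosed_simplex (n + 1)).measurableSet
  have he := (volume_preserving_piFinSuccAbove (fun _ : Fin (n + 1) => ℝ) 0).symm
  have hcons : ⇑(MeasurableEquiv.piFinSuccAbove (fun _ : Fin (n + 1) => ℝ) 0).symm =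
      fun p => Fin.cons p.1 p.2 := funext fun p => Fin.insertNth_zero' p.1 p.2
  have hF : Integrable fun p : ℝ × (Fin n → ℝ) => F (Fin.cons p.1 p.2) := by
    show Integrable (F ∘ fun p : ℝ × (Fin n → ℝ) => Fin.cons p.1 p.2)
    rw [← hcons]
    exact (he.integrable_comp_emb (MeasurableEquiv.measurableEmbedding _)).2
      ((integrable_indicator_iff hmeas).2 hg)
  have hslice : ∀ t ∈ Ioo (0 : ℝ) 1,
      ∫ y, F (Fin.cons t y) = ∫ y in (1 - t) • Simplex n, g (Fin.cons t y) := by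
    rintro t ⟨ht0, ht1⟩
    have hF_slice : (fun y => F (Fin.cons t y)) =
        ((1 - t) • Simplex n).indicator fun y => g (Fin.cons t y) := by
      ext y
      by_cases hy : y ∈ (1 - t) • Simplex n
      · simp [F, hy, (cons_mem_simplex_iff ht1 y).2 ⟨ht0.le, hy⟩]
      · simp [F, hy, (cons_mem_simplex_iff ht1 y).not.2 (by tauto)]
    rw [hF_slice, integral_indicator ((isCompact_simplex n).smul (1 - t)).isClosed.measurableSet]
  have hout : ∀ t ∉ Icc (0 : ℝ) 1, ∫ y, F (Fin.cons t y) = 0 := by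
    intro t ht
    have hzero : (fun y => F (Fin.cons t y)) = fun _ => 0 := funext fun y =>
      indicator_of_notMem
        (fun hv => ht (by simpa using (simplex_subset_Icc _ hv).imp (· 0) (· 0))) g
    rw [hzero, integral_zero]
  calc ∫ v in Simplex (n + 1), g v = ∫ v, F v := (integral_indicator hmeas).symm
    _ = ∫ p : ℝ × (Fin n → ℝ), F (Fin.cons p.1 p.2) := by
      show _ = ∫ p, (F ∘ fun p : ℝ × (Fin n → ℝ) => Fin.cons p.1 p.2) p
      rw [← hcons]
      exact (he.integral_comp' F).symm
    _ = ∫ t, ∫ y, F (Fin.cons t y) := integral_prod _ hF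
    _ = ∫ t in Icc 0 1, ∫ y, F (Fin.cons t y) :=
      (setIntegral_eq_integral_of_forall_compl_eq_zero hout).symm
    _ = ∫ t in Ioo 0 1, ∫ y in (1 - t) • Simplex n, g (Fin.cons t y) := by
      rw [integral_Icc_eq_integral_Ioo]
      exact setIntegral_congr_fun measurableSet_Ioo hslice

theorem prod_smul_apply_pow {n : ℕ} (d : Fin n → ℕ) (c : ℝ) (y : Fin n → ℝ) :
    ∏ i, (c • y) i ^ d i = c ^ (∑ i, d i) * ∏ i, y i ^ d i := by
  simp only [Pi.smul_apply, smul_eq_mul, mul_pow, Finset.prod_mul_distrib,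
    Finset.prod_pow_eq_pow_sum]

theorem setIntegral_simplex_prod_pow (n : ℕ) (d : Fin n → ℕ) :
    ∫ v in Simplex n, ∏ i, v i ^ d i = (∏ i, (d i)! : ℝ) / (n + ∑ i, d i)! := by
  induction n with
  | zero => simp [Simplex, measureReal_def, volume_pi]
  | succ n ih =>
    set b := n + ∑ i, d (Fin.succ i)
    have hslice : ∀ t ∈ Ioo (0 : ℝ) 1,
        ∫ y in (1 - t) • Simplex n, ∏ i, (Fin.cons t y : Fin (n + 1) → ℝ) i ^ d i
          = t ^ d 0 * (1 - t) ^ b * ((∏ i : Fin n, (d i.succ)! : ℝ) / b !) := by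
      rintro t ⟨-, ht1⟩
      simp only [Fin.prod_univ_succ, Fin.cons_zero, Fin.cons_succ]
      rw [integral_const_mul, setIntegral_smul_set_of_homogeneous _ (by linarith)
        (prod_smul_apply_pow _ _), Module.finrank_fin_fun, ih, mul_assoc]
    rw [setIntegral_simplex_succ ((by fun_prop : Continuous
        fun v : Fin (n + 1) → ℝ => ∏ i, v i ^ d i).continuousOn.integrableOn_compact
        (isCompact_simplex _)), setIntegral_congr_fun measurableSet_Ioo hslice,
      ← integral_Ioc_eq_integral_Ioo, ← intervalIntegral.integral_of_le zero_le_one,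
      intervalIntegral.integral_mul_const, integral_pow_mul_one_sub_pow, Fin.prod_univ_succ,
      Fin.sum_univ_succ, show n + 1 + (d 0 + ∑ i : Fin n, d i.succ) = d 0 + b + 1 by omega]
    field_simp

theorem Multiset.prod_map_eq_prod_pow_count {ι M : Type*} [Fintype ι] [DecidableEq ι]
    [CommMonoid M] (s : Multiset ι) (f : ι → M) : (s.map f).prod = ∏ i, f i ^ s.count i := by
  rw [Finset.prod_multiset_map_count]
  exact Finset.prod_subset (Finset.subset_univ _) fun i _ hi => by
    rw [Multiset.count_eq_zero.2 (by simpa using hi), pow_zero]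

theorem Multiset.prod_factorial_count_of_nodup {ι : Type*} [Fintype ι] [DecidableEq ι]
    {s : Multiset ι} (hs : s.Nodup) : ∏ i, (s.count i)! = 1 :=
  Finset.prod_eq_one fun i _ => Nat.factorial_eq_one.2 (Multiset.nodup_iff_count_le_one.1 hs i)

theorem Multiset.prod_factorial_count_pair {ι : Type*} [Fintype ι] [DecidableEq ι] (a b : ι) :
    ∏ i, (Multiset.count i {a, b})! = if a = b then 2 else 1 := by
  split_ifs with h
  · subst h
    rw [Finset.prod_eq_single a] <;> simp +contextual
  · exact Multiset.prod_factorial_count_of_nodup (by simpa using h)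

theorem setIntegral_simplex_multiset_prod {n : ℕ} (s : Multiset (Fin n)) :
    ∫ v in Simplex n, (s.map v).prod = (∏ i, (s.count i)! : ℝ) / (n + Multiset.card s)! := by
  simp only [Multiset.prod_map_eq_prod_pow_count, setIntegral_simplex_prod_pow,
    Multiset.sum_count_eq_card (fun _ _ => Finset.mem_univ _)]

noncomputable def simplexRule (n : ℕ) : ((Fin n → ℝ) → ℝ) →ₗ[ℝ] ℝ :=
  ((n + 1 : ℝ) / ((n + 2) * n !)) • LinearMap.proj (fun _ => 1 / (n + 1 : ℝ))
    + (1 / (n + 2)! : ℝ) • ∑ j, LinearMap.proj (simplexVertex n j)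

theorem simplexRule_apply (n : ℕ) (f : (Fin n → ℝ) → ℝ) :
    simplexRule n f = (n + 1 : ℝ) / ((n + 2) * n !) * f (fun _ => 1 / (n + 1 : ℝ))
      + 1 / (n + 2)! * ∑ j, f (simplexVertex n j) := by
  simp [simplexRule]

theorem simplexVertex_apply {n : ℕ} (j : Fin (n + 1)) (i : Fin n) :
    simplexVertex n j i = if j = i.succ then 1 else 0 := by
  simp [simplexVertex, Fin.ext_iff]

theorem sum_simplexVertex_apply {n : ℕ} (a : Fin n) : ∑ j, simplexVertex n j a = 1 := by
  simp [simplexVertex_apply]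

theorem sum_simplexVertex_apply_mul {n : ℕ} (a b : Fin n) :
    ∑ j, simplexVertex n j a * simplexVertex n j b = if a = b then 1 else 0 := by
  simp [simplexVertex_apply, eq_comm]

theorem simplexRule_multiset_prod {n : ℕ} (s : Multiset (Fin n)) (hs : Multiset.card s ≤ 2) :
    simplexRule n (fun v => (s.map v).prod) = ∫ v in Simplex n, (s.map v).prod := by
  rw [setIntegral_simplex_multiset_prod, simplexRule_apply, ← Nat.cast_prod]
  have hf2 : ((n + 2)! : ℝ) = (n + 2) * ((n + 1) * n !) := by
    push_cast [Nat.factorial_succ]; ring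
  obtain h | h | h : Multiset.card s = 0 ∨ Multiset.card s = 1 ∨ Multiset.card s = 2 := by omega
  · rw [Multiset.card_eq_zero.1 h]
    simp only [Multiset.map_zero, Multiset.prod_zero, Multiset.count_zero, Nat.factorial_zero,
      Finset.prod_const_one, Multiset.card_zero, Finset.sum_const, Finset.card_fin, nsmul_eq_mul,
      add_zero, hf2]
    push_cast
    field_simp
    ring
  · obtain ⟨a, rfl⟩ := Multiset.card_eq_one.1 h
    rw [Multiset.prod_factorial_count_of_nodup (Multiset.nodup_singleton a)]
    simp only [Multiset.map_singleton, Multiset.prod_singleton, sum_simplexVertex_apply,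
      Multiset.card_singleton, Nat.factorial_succ]
    push_cast
    field_simp
    ring
  · obtain ⟨a, b, rfl⟩ := Multiset.card_eq_two.1 h
    rw [Multiset.prod_factorial_count_pair]
    simp only [Multiset.insert_eq_cons, Multiset.map_cons, Multiset.map_singleton,
      Multiset.prod_cons, Multiset.prod_singleton, sum_simplexVertex_apply_mul, Multiset.card_cons,
      Multiset.card_singleton, hf2]
    split_ifs <;> field_simp <;> ring

theorem MvPolynomial.eval_eq_sum_toMultiset {σ R : Type*} [Fintype σ] [DecidableEq σ]
    [CommSemiring R] (x : σ → R) (p : MvPolynomial σ R) :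
    eval x p = ∑ d ∈ p.support, coeff d p * ((Finsupp.toMultiset d).map x).prod := by
  simp only [eval_eq', Multiset.prod_map_eq_prod_pow_count, Finsupp.count_toMultiset]

theorem stmt_10 (n : ℕ) (p : MvPolynomial (Fin n) ℝ) (hp : p.totalDegree ≤ 2) :
    ((n + 1 : ℝ) / ((n + 2) * (Nat.factorial n : ℝ)))
        * eval (fun _ => 1 / (n + 1 : ℝ)) p
      + (1 / (Nat.factorial (n + 2) : ℝ)) * ∑ j : Fin (n + 1), eval (simplexVertex n j) p
      = ∫ v in Simplex n, eval v p := by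
  set m := fun (d : Fin n →₀ ℕ) (v : Fin n → ℝ) => ((Finsupp.toMultiset d).map v).prod
  have hp_eq : (fun v => eval v p) = ∑ d ∈ p.support, coeff d p • m d := by
    ext v
    simp [eval_eq_sum_toMultiset, m]
  have hexact (d) (hd : d ∈ p.support) : simplexRule n (m d) = ∫ v in Simplex n, m d v :=
    simplexRule_multiset_prod _
      ((Finsupp.card_toMultiset d).trans_le ((le_totalDegree hd).trans hp))
  have hint (d) : IntegrableOn (m d) (Simplex n) :=
    (by fun_prop : Continuous (m d)).continuousOn.integrableOn_compact (isCompact_simplex n)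
  calc _ = simplexRule n (fun v => eval v p) := (simplexRule_apply n _).symm
    _ = ∑ d ∈ p.support, coeff d p * ∫ v in Simplex n, m d v := by
      rw [hp_eq, map_sum]
      exact Finset.sum_congr rfl fun d hd => by rw [map_smul, hexact d hd, smul_eq_mul]
    _ = ∫ v in Simplex n, eval v p := by
      simp only [eval_eq_sum_toMultiset]
      rw [integral_finsetSum _ fun d _ => (hint d).const_mul _]
      simp only [integral_const_mul, m]
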